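/- For all a, h > 0, the minimum of the squared Euclidean norm over each of the three closed lateral segments AC⁰, BA⁰, CB⁰ of the Schönhardt twisted octahedron equals a²(2+√3)/12, and over each of the three reflex lateral segments AB⁰, BC⁰, CA⁰ it equals a²(2−√3)/12, in each case attained at the midpoint of the segment; consequently the segments AC⁰, BA⁰, CB⁰ intersect the open unit ball if and only if a²(2+√3)/12 < 1, and the segments AB⁰, BC⁰, CA⁰ intersect the open unit ball if and only if a²(2−√3)/12 < 1. -/

import Mathlib

noncomputable section

/-- Vertex `A` of Schönhardt's twisted octahedron with parameters `a`, `h`. -/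
def schA (a h : ℝ) : EuclideanSpace ℝ (Fin 3) := WithLp.toLp 2 ![a / Real.sqrt 3, 0, h]

/-- Vertex `B` of Schönhardt's twisted octahedron. -/
def schB (a h : ℝ) : EuclideanSpace ℝ (Fin 3) :=
  WithLp.toLp 2 ![-(a / Real.sqrt 3) / 2, Real.sqrt 3 / 2 * (a / Real.sqrt 3), h]

/-- Vertex `C` of Schönhardt's twisted octahedron. -/
def schC (a h : ℝ) : EuclideanSpace ℝ (Fin 3) :=
  WithLp.toLp 2 ![-(a / Real.sqrt 3) / 2, -(Real.sqrt 3 / 2 * (a / Real.sqrt 3)), h]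

/-- Vertex `A⁰` of Schönhardt's twisted octahedron. -/
def schA0 (a h : ℝ) : EuclideanSpace ℝ (Fin 3) := WithLp.toLp 2 ![0, a / Real.sqrt 3, -h]

/-- Vertex `B⁰` of Schönhardt's twisted octahedron. -/
def schB0 (a h : ℝ) : EuclideanSpace ℝ (Fin 3) :=
  WithLp.toLp 2 ![-(Real.sqrt 3 / 2 * (a / Real.sqrt 3)), -((a / Real.sqrt 3) / 2), -h]

/-- Vertex `C⁰` of Schönhardt's twisted octahedron. -/
def schC0 (a h : ℝ) : EuclideanSpace ℝ (Fin 3) :=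
  WithLp.toLp 2 ![Real.sqrt 3 / 2 * (a / Real.sqrt 3), -((a / Real.sqrt 3) / 2), -h]

lemma sch_normsq3 (x : EuclideanSpace ℝ (Fin 3)) :
    ‖x‖ ^ 2 = x 0 ^ 2 + x 1 ^ 2 + x 2 ^ 2 := by
  rw [EuclideanSpace.norm_eq, Real.sq_sqrt (by positivity)]
  simp [Fin.sum_univ_three, Real.norm_eq_abs, sq_abs]

lemma sch_mid_eq (p q : EuclideanSpace ℝ (Fin 3)) :
    midpoint ℝ p q = (1/2 : ℝ) • p + (1/2 : ℝ) • q := by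
  rw [midpoint_eq_smul_add, smul_add]
  norm_num

lemma sch_expand_sq (p q : EuclideanSpace ℝ (Fin 3)) (u v : ℝ) :
    ‖u • p + v • q‖ ^ 2 =
      u ^ 2 * ‖p‖ ^ 2 + 2 * (u * v) * (inner ℝ p q : ℝ) + v ^ 2 * ‖q‖ ^ 2 := by
  rw [← real_inner_self_eq_norm_sq]
  simp only [inner_add_left, inner_add_right, real_inner_smul_left, real_inner_smul_right,
    real_inner_comm q p]
  rw [real_inner_self_eq_norm_sq, real_inner_self_eq_norm_sq]
  ring

lemma sch_seg_helper (p q : EuclideanSpace ℝ (Fin 3)) (hpq : ‖p‖ = ‖q‖) (m : ℝ)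
    (hm : ‖midpoint ℝ p q‖ ^ 2 = m) :
    IsLeast ((fun z : EuclideanSpace ℝ (Fin 3) => ‖z‖ ^ 2) '' segment ℝ p q) m ∧
    ‖midpoint ℝ p q‖ ^ 2 = m ∧
    ((∃ z ∈ segment ℝ p q, ‖z‖ < 1) ↔ m < 1) := by
  have hcs := real_inner_le_norm p q
  have hmid : m = (1/2)^2 * ‖p‖^2 + 2*(1/2*(1/2)) * (inner ℝ p q : ℝ) + (1/2)^2 * ‖q‖^2 := by
    rw [← hm, sch_mid_eq, sch_expand_sq]
  have hlb : ∀ x ∈ (fun z : EuclideanSpace ℝ (Fin 3) => ‖z‖ ^ 2) '' segment ℝ p q, m ≤ x := by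
    rintro x ⟨z, ⟨s, t, hs, ht, hst, rfl⟩, rfl⟩
    show m ≤ ‖s • p + t • q‖ ^ 2
    rw [sch_expand_sq]
    have hR : (inner ℝ p q : ℝ) ≤ ‖p‖ ^ 2 := by
      calc (inner ℝ p q : ℝ) ≤ ‖p‖ * ‖q‖ := hcs
        _ = ‖p‖ ^ 2 := by rw [← hpq]; ring
    have key : 0 ≤ (s - t) ^ 2 * (‖p‖ ^ 2 - (inner ℝ p q : ℝ)) :=
      mul_nonneg (sq_nonneg _) (by linarith)
    rw [← hpq] at hmid ⊢
    have ht' : t = 1 - s := by linarith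
    subst ht'
    nlinarith [key, hR]
  have hleast : IsLeast ((fun z : EuclideanSpace ℝ (Fin 3) => ‖z‖ ^ 2) '' segment ℝ p q) m :=
    ⟨⟨_, midpoint_mem_segment p q, hm⟩, hlb⟩
  refine ⟨hleast, hm, ?_⟩
  constructor
  · rintro ⟨z, hz, hz1⟩
    have := hlb (‖z‖^2) ⟨z, hz, rfl⟩
    nlinarith [norm_nonneg z]
  · intro h1
    refine ⟨midpoint ℝ p q, midpoint_mem_segment p q, ?_⟩
    nlinarith [norm_nonneg (midpoint ℝ p q)]

lemma sch_norm_eq_of_sq {p q : EuclideanSpace ℝ (Fin 3)} (hpq : ‖p‖ ^ 2 = ‖q‖ ^ 2) :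
    ‖p‖ = ‖q‖ := by
  have := congrArg Real.sqrt hpq
  rwa [Real.sqrt_sq (norm_nonneg _), Real.sqrt_sq (norm_nonneg _)] at this

/-- For all `a, h > 0`, the minimum of the squared Euclidean norm over each of
the lateral segments `AC⁰, BA⁰, CB⁰` equals `a²(2+√3)/12` and over each of the
reflex lateral segments `AB⁰, BC⁰, CA⁰` equals `a²(2−√3)/12`, attained at the
midpoints; consequently the former meet the open unit ball iff
`a²(2+√3)/12 < 1` and the latter iff `a²(2−√3)/12 < 1`. -/
theorem schonhardt_lateral_edge_min_norm (a h : ℝ) (ha : 0 < a) (hh : 0 < h) :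
    (∀ e ∈ [(schA a h, schC0 a h), (schB a h, schA0 a h), (schC a h, schB0 a h)],
      IsLeast ((fun z : EuclideanSpace ℝ (Fin 3) => ‖z‖ ^ 2) '' segment ℝ e.1 e.2)
          (a ^ 2 * (2 + Real.sqrt 3) / 12) ∧
      ‖midpoint ℝ e.1 e.2‖ ^ 2 = a ^ 2 * (2 + Real.sqrt 3) / 12 ∧
      ((∃ z ∈ segment ℝ e.1 e.2, ‖z‖ < 1) ↔ a ^ 2 * (2 + Real.sqrt 3) / 12 < 1)) ∧
    (∀ e ∈ [(schA a h, schB0 a h), (schB a h, schC0 a h), (schC a h, schA0 a h)],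
      IsLeast ((fun z : EuclideanSpace ℝ (Fin 3) => ‖z‖ ^ 2) '' segment ℝ e.1 e.2)
          (a ^ 2 * (2 - Real.sqrt 3) / 12) ∧
      ‖midpoint ℝ e.1 e.2‖ ^ 2 = a ^ 2 * (2 - Real.sqrt 3) / 12 ∧
      ((∃ z ∈ segment ℝ e.1 e.2, ‖z‖ < 1) ↔ a ^ 2 * (2 - Real.sqrt 3) / 12 < 1)) := by
  have hs : Real.sqrt 3 ^ 2 = 3 := Real.sq_sqrt (by norm_num)
  have hs0 : Real.sqrt 3 ≠ 0 := by positivity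
  have hs3 : Real.sqrt 3 ^ 3 = 3 * Real.sqrt 3 := by rw [pow_succ, hs]
  have hs4 : Real.sqrt 3 ^ 4 = 9 := by
    rw [pow_succ, hs3, mul_assoc, Real.mul_self_sqrt (by norm_num)]; norm_num
  have hs5 : Real.sqrt 3 ^ 5 = 9 * Real.sqrt 3 := by rw [pow_succ, hs4]
  constructor <;>
  · intro e he
    simp only [List.mem_cons, List.not_mem_nil, or_false] at he
    rcases he with rfl | rfl | rfl <;>
    refine sch_seg_helper _ _ (sch_norm_eq_of_sq ?_) _ ?_ <;>
    · simp only [sch_mid_eq, sch_normsq3, schA, schB, schC, schA0, schB0, schC0]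
      try simp
      try field_simp
      try ring_nf
      try simp only [hs, hs3, hs4, hs5]
      try ring
      try norm_num
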